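/- arXiv:2309.17178 — 5 statements merged into one kernel-verified Lean document; each statement's English description precedes it below -/
import Mathlib

section
/- Let X be an infinite compact Hausdorff topological space and suppose the infinite dihedral group D_∞ acts on X by homeomorphisms such that the action is minimal. Then the action has the marker property: for every finite subset F ⊆ D_∞ there exists a nonempty open subset U ⊆ X such that (1) gU ∩ g'U = ∅ for any two distinct g, g' ∈ F, and (2) X = ⋃_{g ∈ D_∞} gU. -/
/-!
A minimal action on a Hausdorff space in which no nontrivial element fixes a nonempty open set
has the marker property: the non-fixed sets are open and dense, so some point `x` is moved by
every `g⁻¹ g'` with `g ≠ g'` in `F`; a neighbourhood `U` of `x` separated from its finitely many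
translates works, and by minimality the translates of `U` cover `X`.

For `D_∞` this freeness holds. If a rotation `sⁿ` fixed a nonempty open set, then, since every
conjugate of `sⁿ` is `s^{±n}`, minimality would make `sⁿ` act trivially; orbits would then have
at most `2|n|` points and `X` would be finite. If a reflection fixed a nonempty open set `W`,
the translates `sᵏ W` would be pairwise disjoint (an overlap of `sᵏ W` and `sʲ W` is fixed by the
rotation `s^{2(k-j)}`) and would cover `X`, which is impossible in a compact space.
-/

open Pointwise

open Filter Function MulAction Set Topology

def MulAction.IsTopologicallyFree (G X : Type*) [Group G] [TopologicalSpace X] [MulAction G X] :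
    Prop :=
  ∀ g : G, g ≠ 1 → interior (fixedBy X g) = ∅

theorem Function.Periodic.finite_range {α β : Type*} [AddCommGroup α] [LinearOrder α]
    [IsOrderedAddMonoid α] [Archimedean α] [LocallyFiniteOrder α] {f : α → β} {c : α}
    (h : Periodic f c) (hc : c ≠ 0) : (range f).Finite :=
  h.image_uIcc hc 0 ▸ (finite_Icc _ _).image f

theorem finite_of_pairwise_disjoint_of_iUnion_eq_univ {X ι : Type*} [TopologicalSpace X]
    [CompactSpace X] {U : ι → Set X} (ho : ∀ i, IsOpen (U i)) (hne : ∀ i, (U i).Nonempty)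
    (hd : Pairwise (Disjoint on U)) (hcov : ⋃ i, U i = univ) : Finite ι := by
  obtain ⟨T, hT⟩ := isCompact_univ.elim_finite_subcover U ho hcov.ge
  refine finite_univ_iff.1 (T.finite_toSet.subset fun i _ => ?_)
  obtain ⟨x, hx⟩ := hne i
  obtain ⟨j, hj, hxj⟩ := mem_iUnion₂.1 (hT (mem_univ x))
  rwa [hd.eq (not_disjoint_iff.2 ⟨x, hx, hxj⟩)]

section

variable {G X : Type*} [Group G] [TopologicalSpace X] [MulAction G X]

theorem finite_of_orbit_finite [T1Space X] [IsMinimal G X] {x : X} (h : (orbit G x).Finite) :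
    Finite X := by
  rwa [← finite_univ_iff, ← (dense_orbit G x).closure_eq, h.isClosed.closure_eq]

variable [T2Space X] [ContinuousConstSMul G X]

theorem eventually_smallSets_disjoint_smul_self {g : G} {x : X} (hx : g • x ≠ x) :
    ∀ᶠ V in (𝓝 x).smallSets, Disjoint (g • V) V := by
  obtain ⟨s, hs, t, ht, hst⟩ := Filter.disjoint_iff.1 (disjoint_nhds_nhds.2 hx)
  refine eventually_smallSets.2 ⟨t ∩ g⁻¹ • s, inter_mem ht ?_, fun V hV => ?_⟩
  · simpa using smul_mem_nhds_smul g⁻¹ hs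
  · refine hst.mono ?_ (hV.trans inter_subset_left)
    calc g • V ⊆ g • g⁻¹ • s := smul_set_mono (hV.trans inter_subset_right)
      _ = s := smul_inv_smul g s

theorem exists_isOpen_forall_disjoint_smul_self {x : X} {S : Finset G}
    (hS : ∀ g ∈ S, g • x ≠ x) : ∃ U : Set X, IsOpen U ∧ x ∈ U ∧ ∀ g ∈ S, Disjoint (g • U) U := by
  obtain ⟨t, ht, hdisj⟩ := eventually_smallSets.1
    ((eventually_all_finset S).2 fun g hg => eventually_smallSets_disjoint_smul_self (hS g hg))
  obtain ⟨U, hUt, hUo, hxU⟩ := mem_nhds_iff.1 ht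
  exact ⟨U, hUo, hxU, hdisj U hUt⟩

namespace MulAction.IsTopologicallyFree

theorem exists_forall_smul_ne [Nonempty X] (hfree : IsTopologicallyFree G X) {S : Finset G}
    (hS : 1 ∉ S) : ∃ x : X, ∀ g ∈ S, g • x ≠ x := by
  have hdense : Dense (⋂₀ ((fun g => (fixedBy X g)ᶜ) '' (S : Set G))) := by
    refine (S.finite_toSet.image _).dense_sInter ?_ ?_
    · rintro _ ⟨g, -, rfl⟩
      exact (isClosed_eq (continuous_const_smul g) continuous_id).isOpen_compl
    · rintro _ ⟨g, hg, rfl⟩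
      exact interior_eq_empty_iff_dense_compl.1 (hfree g (ne_of_mem_of_not_mem hg hS))
  obtain ⟨x, hx⟩ := hdense.nonempty
  exact ⟨x, fun g hg => hx _ ⟨g, hg, rfl⟩⟩

theorem exists_isOpen_pairwiseDisjoint_smul [Nonempty X] (hfree : IsTopologicallyFree G X)
    (F : Finset G) :
    ∃ U : Set X, U.Nonempty ∧ IsOpen U ∧ (F : Set G).PairwiseDisjoint (· • U) := by
  classical
  obtain ⟨x, hx⟩ := hfree.exists_forall_smul_ne (Finset.notMem_erase 1 (F⁻¹ * F))
  obtain ⟨U, hUo, hxU, hU⟩ := exists_isOpen_forall_disjoint_smul_self hx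
  refine ⟨U, ⟨x, hxU⟩, hUo, fun g hg g' hg' hgg' => ?_⟩
  have hmem : g⁻¹ * g' ∈ (F⁻¹ * F).erase 1 :=
    Finset.mem_erase.2 ⟨by rwa [ne_eq, inv_mul_eq_one],
      Finset.mul_mem_mul (Finset.inv_mem_inv hg) hg'⟩
  have := (disjoint_smul_set (a := g)).2 (hU _ hmem)
  rw [mul_smul, smul_inv_smul] at this
  exact this.symm

end MulAction.IsTopologicallyFree

end

namespace DihedralGroup

variable {X : Type*} [MulAction (DihedralGroup 0) X]

theorem fixedBy_conj_r (g : DihedralGroup 0) (n : ZMod 0) :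
    fixedBy X (g * r n * g⁻¹) = fixedBy X (r n) := by
  cases g with
  | r k => rw [inv_r, r_mul_r, r_mul_r, add_neg_cancel_comm]
  | sr k => rw [inv_sr, sr_mul_r, sr_mul_sr, sub_add_cancel_left, ← inv_r, fixedBy_inv]

theorem finite_orbit_of_forall_r_smul_eq {n : ZMod 0} (hn : n ≠ 0) (h : ∀ x : X, r n • x = x)
    (x : X) : (orbit (DihedralGroup 0) x).Finite := by
  -- `ZMod 0` is `ℤ` by definition; indexing by `ℤ` makes its order available.
  have hr : Periodic (fun m : ℤ => @r 0 m • x) n := fun m =>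
    (mul_smul (@r 0 m) (r n) x).trans (congrArg _ (h x))
  have hsr : Periodic (fun m : ℤ => @sr 0 m • x) n := fun m =>
    (mul_smul (@sr 0 m) (r n) x).trans (congrArg _ (h x))
  refine ((Periodic.finite_range hr hn).union (Periodic.finite_range hsr hn)).subset ?_
  rintro _ ⟨g, rfl⟩
  cases g with
  | r m => exact Or.inl ⟨m, rfl⟩
  | sr m => exact Or.inr ⟨m, rfl⟩

variable [TopologicalSpace X] [IsMinimal (DihedralGroup 0) X] [T1Space X] [Infinite X]

theorem interior_fixedBy_r_eq_empty {n : ZMod 0} (hn : n ≠ 0) :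
    interior (fixedBy X (r n)) = ∅ := by
  by_contra hne
  have htriv : ∀ x : X, r n • x = x := fun x => by
    obtain ⟨g, hg⟩ :=
      isOpen_interior.exists_smul_mem (DihedralGroup 0) x (nonempty_iff_ne_empty.2 hne)
    have : x ∈ g⁻¹ • fixedBy X (r n) :=
      mem_smul_set_iff_inv_smul_mem.2 (by rw [inv_inv]; exact interior_subset hg)
    rwa [smul_fixedBy, fixedBy_conj_r] at this
  obtain ⟨x⟩ : Nonempty X := inferInstance
  exact not_finite_iff_infinite.2 ‹_›
    (finite_of_orbit_finite (finite_orbit_of_forall_r_smul_eq hn htriv x))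

theorem interior_fixedBy_sr_eq_empty [CompactSpace X] [ContinuousConstSMul (DihedralGroup 0) X]
    (n : ZMod 0) : interior (fixedBy X (sr n)) = ∅ := by
  set W := interior (fixedBy X (sr n))
  by_contra hne
  have hW : W.Nonempty := nonempty_iff_ne_empty.2 hne
  have hdisj : Pairwise (Disjoint on fun k : ZMod 0 => r k • W) := by
    intro k j hkj
    have hkj' : (2 : ZMod 0) * (k - j) ≠ 0 := mul_ne_zero two_ne_zero (sub_ne_zero.2 hkj)
    rw [Function.onFun, disjoint_iff_inter_eq_empty, ← subset_empty_iff,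
      ← interior_fixedBy_r_eq_empty (X := X) hkj']
    refine interior_maximal ?_ ((isOpen_interior.smul _).inter (isOpen_interior.smul _))
    calc r k • W ∩ r j • W
        ⊆ fixedBy X (r k * sr n * (r k)⁻¹) ∩ fixedBy X (r j * sr n * (r j)⁻¹) := by
          rw [← smul_fixedBy, ← smul_fixedBy]; gcongr <;> exact interior_subset
      _ ⊆ fixedBy X (r (2 * (k - j))) := by
          convert fixedBy_mul X _ _ using 2
          simp only [inv_r, r_mul_sr, sr_mul_r, sr_mul_sr]
          congr 1; ring
  have hcov : ⋃ k : ZMod 0, r k • W = univ := by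
    rw [← univ_subset_iff, ← isOpen_interior.iUnion_smul (DihedralGroup 0) hW]
    refine iUnion_subset fun g => ?_
    cases g with
    | r k => exact subset_iUnion (fun k : ZMod 0 => r k • W) k
    | sr m =>
      have hWfix : sr n • W = W := set_mem_fixedBy_of_subset_fixedBy interior_subset
      refine subset_iUnion_of_subset (n - m) (le_of_eq ?_)
      calc sr m • W = sr m • sr n • W := by rw [hWfix]
        _ = r (n - m) • W := by rw [smul_smul]; rfl
  exact not_finite_iff_infinite.2 inferInstance (finite_of_pairwise_disjoint_of_iUnion_eq_univ
    (fun _ => isOpen_interior.smul _) (fun _ => hW.smul_set) hdisj hcov)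

theorem isTopologicallyFree [CompactSpace X] [ContinuousConstSMul (DihedralGroup 0) X] :
    IsTopologicallyFree (DihedralGroup 0) X := by
  intro g hg
  cases g with
  | r n => exact interior_fixedBy_r_eq_empty fun hn => hg (by rw [hn]; rfl)
  | sr n => exact interior_fixedBy_sr_eq_empty n

end DihedralGroup

/-- **Marker property for minimal actions of the infinite dihedral group.**
If the infinite dihedral group `D_∞` (realized as `DihedralGroup 0`) acts by homeomorphisms
on an infinite compact Hausdorff space `X` and the action is minimal (every orbit is dense),
then for every finite subset `F ⊆ D_∞` there is a nonempty open set `U ⊆ X` such that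
`gU ∩ g'U = ∅` for all distinct `g, g' ∈ F` and `X = ⋃_{g ∈ D_∞} gU`. -/
theorem dihedral_minimal_marker_property
    {X : Type*} [TopologicalSpace X] [CompactSpace X] [T2Space X] [Infinite X]
    [MulAction (DihedralGroup 0) X] [ContinuousConstSMul (DihedralGroup 0) X]
    (hmin : ∀ x : X, Dense (MulAction.orbit (DihedralGroup 0) x))
    (F : Finset (DihedralGroup 0)) :
    ∃ U : Set X, U.Nonempty ∧ IsOpen U ∧
      (∀ g ∈ F, ∀ g' ∈ F, g ≠ g' → (g • U) ∩ (g' • U) = ∅) ∧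
      (⋃ g : DihedralGroup 0, g • U) = Set.univ := by
  have : IsMinimal (DihedralGroup 0) X := ⟨hmin⟩
  obtain ⟨U, hne, hUo, hdisj⟩ :=
    (DihedralGroup.isTopologicallyFree (X := X)).exists_isOpen_pairwiseDisjoint_smul F
  exact ⟨U, hne, hUo, fun g hg g' hg' hgg' => disjoint_iff_inter_eq_empty.1 (hdisj hg hg' hgg'),
    hUo.iUnion_smul _ hne⟩
end

section
/- Let the infinite dihedral group D_∞ act by homeomorphisms on an infinite compact Hausdorff topological space X such that the action is minimal. Then for every x ∈ X the intersection of the stabilizer Stab(x) with the translation subgroup ⟨s⟩ is trivial; that is, sⁿ·x ≠ x for every integer n ≠ 0. -/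
/-!
If `sⁿ • x = x` with `n ≠ 0`, the stabilizer of `x` contains `⟨sⁿ⟩`, the kernel of the reduction
`D_∞ → D_|n|`, so it has finite index. The orbit of `x` is then finite, hence closed in the
Hausdorff space `X`; being dense, it is all of `X`, contradicting that `X` is infinite.
-/

namespace DihedralGroup

variable {m n : ℕ}

def castHom (h : m ∣ n) : DihedralGroup n →* DihedralGroup m where
  toFun
    | r i => r (ZMod.castHom h (ZMod m) i)
    | sr i => sr (ZMod.castHom h (ZMod m) i)
  map_one' := congrArg r (map_zero _)
  map_mul' := by
    rintro (i | i) (j | j) <;> simp only [r_mul_r, r_mul_sr, sr_mul_r, sr_mul_sr, map_add, map_sub]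

@[simp]
theorem castHom_r (h : m ∣ n) (i : ZMod n) : castHom h (r i) = r (ZMod.castHom h (ZMod m) i) :=
  rfl

@[simp]
theorem castHom_sr (h : m ∣ n) (i : ZMod n) : castHom h (sr i) = sr (ZMod.castHom h (ZMod m) i) :=
  rfl

theorem ker_castHom_zero (k : ℤ) :
    (castHom (dvd_zero k.natAbs)).ker = Subgroup.zpowers ((r 1 : DihedralGroup 0) ^ k) := by
  ext (i | i) <;> simp only [MonoidHom.mem_ker, Subgroup.mem_zpowers_iff, ← zpow_mul, one_def]
  · obtain ⟨i, rfl⟩ := ZMod.intCast_surjective i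
    simp only [r_one_zpow, castHom_r, map_intCast, r.injEq, Int.cast_inj,
      ZMod.intCast_zmod_eq_zero_iff_dvd, Int.natAbs_dvd, eq_comm (b := (i : ZMod 0))]
    exact dvd_def
  · simp only [r_one_zpow, castHom_sr, reduceCtorEq, exists_false]

instance finiteIndex_zpowers_r_one_zpow {k : ℤ} [NeZero k] :
    (Subgroup.zpowers ((r 1 : DihedralGroup 0) ^ k)).FiniteIndex := by
  have : NeZero k.natAbs := ⟨Int.natAbs_ne_zero.mpr (NeZero.ne k)⟩
  rw [← ker_castHom_zero]
  exact Subgroup.finiteIndex_ker _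

end DihedralGroup

theorem MulAction.finite_orbit_of_finiteIndex_stabilizer {G α : Type*} [Group G] [MulAction G α]
    (a : α) [(stabilizer G a).FiniteIndex] : (orbit G a).Finite :=
  Set.finite_coe_iff.mp ((orbitEquivQuotientStabilizer G a).finite_iff.mpr inferInstance)

theorem Set.Finite.not_dense {X : Type*} [TopologicalSpace X] [T1Space X] [Infinite X] {s : Set X}
    (hs : s.Finite) : ¬ Dense s := fun hd =>
  Set.infinite_univ (hd.closure_eq ▸ hs.isClosed.closure_eq ▸ hs)

theorem dihedral_minimal_stabilizer_inter_translations_trivial_general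
    {X : Type*} [TopologicalSpace X] [T2Space X] [Infinite X]
    [MulAction (DihedralGroup 0) X]
    (hmin : ∀ x : X, Dense (MulAction.orbit (DihedralGroup 0) x)) (x : X) :
    MulAction.stabilizer (DihedralGroup 0) x ⊓
        Subgroup.zpowers (DihedralGroup.r 1 : DihedralGroup 0) = ⊥ ∧
      ∀ n : ℤ, n ≠ 0 → ((DihedralGroup.r 1 : DihedralGroup 0) ^ n) • x ≠ x := by
  have translation_free :
      ∀ n : ℤ, n ≠ 0 → ((DihedralGroup.r 1 : DihedralGroup 0) ^ n) • x ≠ x := by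
    intro n hn hfix
    have : NeZero n := ⟨hn⟩
    have : (MulAction.stabilizer (DihedralGroup 0) x).FiniteIndex :=
      Subgroup.finiteIndex_of_le (Subgroup.zpowers_le.mpr hfix)
    exact (MulAction.finite_orbit_of_finiteIndex_stabilizer x).not_dense (hmin x)
  refine ⟨(Subgroup.eq_bot_iff_forall _).mpr ?_, translation_free⟩
  rintro _ ⟨hfix, n, rfl⟩
  by_contra hne
  exact translation_free n (by rintro rfl; exact hne (zpow_zero _)) hfix

/-- For a minimal action of the infinite dihedral group `D_∞ = ⟨s, t ∣ t² = 1, tsts = 1⟩`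
(realized as `DihedralGroup 0`, with `s = r 1`) by homeomorphisms on an infinite compact
Hausdorff space `X`, for every `x ∈ X` the intersection of the stabilizer `Stab(x)` with the
translation subgroup `⟨s⟩` is trivial; that is, `sⁿ • x ≠ x` for every integer `n ≠ 0`. -/
theorem dihedral_minimal_stabilizer_inter_translations_trivial
    {X : Type*} [TopologicalSpace X] [CompactSpace X] [T2Space X] [Infinite X]
    [MulAction (DihedralGroup 0) X] [ContinuousConstSMul (DihedralGroup 0) X]
    (hmin : ∀ x : X, Dense (MulAction.orbit (DihedralGroup 0) x)) (x : X) :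
    MulAction.stabilizer (DihedralGroup 0) x ⊓
        Subgroup.zpowers (DihedralGroup.r 1 : DihedralGroup 0) = ⊥ ∧
      ∀ n : ℤ, n ≠ 0 → ((DihedralGroup.r 1 : DihedralGroup 0) ^ n) • x ≠ x :=
  dihedral_minimal_stabilizer_inter_translations_trivial_general hmin x
end

section
/- Let the infinite dihedral group D_∞ act by homeomorphisms on an infinite compact Hausdorff topological space X such that the action is minimal. Then for every x ∈ X, either Stab(x) = {e} or Stab(x) = {e, sⁿt} for some n ∈ ℤ. In particular, every stabilizer subgroup has order at most 2. -/
/-!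
If a rotation `sⁿ` with `n ≠ 0` fixed `x`, then `Stab(x) ⊇ ⟨sⁿ⟩` would have finite index
(`⟨sⁿ⟩` contains the kernel of the reduction `D_∞ → D_|n|`), so the orbit of `x` would be
finite. A finite dense set in a T₁ space is the whole space, contradicting `X` infinite. Hence
`Stab(x)` contains no nontrivial rotation, and since the product of two distinct reflections
is a nontrivial rotation, it contains at most one reflection.
-/

namespace MulAction

theorem finite_of_dense_orbit {G X : Type*} [Group G] [MulAction G X] [TopologicalSpace X]
    [T1Space X] {x : X} (hx : Dense (orbit G x)) [(stabilizer G x).FiniteIndex] : Finite X := by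
  have horbit : (orbit G x).Finite :=
    (orbitEquivQuotientStabilizer G x).finite_iff.mpr inferInstance
  rw [← Set.finite_univ_iff, ← hx.closure_eq, horbit.isClosed.closure_eq]
  exact horbit

end MulAction

namespace DihedralGroup

variable {m n : ℕ}

def map (f : ZMod n →+ ZMod m) : DihedralGroup n →* DihedralGroup m where
  toFun
    | r i => r (f i)
    | sr i => sr (f i)
  map_one' := congrArg r (map_zero f)
  map_mul' := by rintro (i | i) (j | j) <;> simp [map_add, map_sub]

theorem finiteIndex_zpowers_r {k : ℤ} (hk : k ≠ 0) :
    (Subgroup.zpowers (r k : DihedralGroup 0)).FiniteIndex := by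
  have : NeZero k.natAbs := ⟨Int.natAbs_ne_zero.mpr hk⟩
  refine Subgroup.finiteIndex_of_le
    (H := (map (n := 0) (Int.castAddHom (ZMod k.natAbs))).ker) ?_
  -- `ZMod 0` is `ℤ` only up to definitional unfolding, hence the `(i : ℤ)` pattern and `rfl`s.
  rintro ((i : ℤ) | i) hi
  · have hi : ((i : ℤ) : ZMod k.natAbs) = 0 := r.inj hi
    rw [ZMod.intCast_zmod_eq_zero_iff_dvd, Int.natCast_natAbs, abs_dvd] at hi
    obtain ⟨j, rfl⟩ := hi
    exact ⟨j, (r_zpow (n := 0) k j).trans rfl⟩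
  · cases hi

theorem eq_bot_or_exists_coe_eq_pair_sr {H : Subgroup (DihedralGroup n)}
    (hH : ∀ i, r i ∈ H → i = 0) : H = ⊥ ∨ ∃ i, (H : Set (DihedralGroup n)) = {1, sr i} := by
  by_cases hsr : ∃ i, sr i ∈ H
  · obtain ⟨i, hi⟩ := hsr
    refine Or.inr ⟨i, Set.ext ?_⟩
    rintro (j | j)
    · simpa [← r_zero] using ⟨hH j, fun h => h ▸ H.one_mem⟩
    · have hmem : sr j ∈ H ↔ r (j - i) ∈ H := by rw [← sr_mul_sr, H.mul_mem_cancel_left hi]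
      simp only [SetLike.mem_coe, hmem, Set.mem_insert_iff, Set.mem_singleton_iff, ← r_zero,
        reduceCtorEq, sr.injEq, false_or]
      exact ⟨fun h => sub_eq_zero.mp (hH _ h),
        fun h => by rw [h, sub_self, r_zero]; exact H.one_mem⟩
  · push Not at hsr
    refine Or.inl ((Subgroup.eq_bot_iff_forall H).mpr ?_)
    rintro (j | j) hj
    · rw [hH j hj, r_zero]
    · exact absurd hj (hsr j)

end DihedralGroup

theorem dihedral_minimal_stabilizer_eq_bot_or_pair_general
    {X : Type*} [TopologicalSpace X] [T2Space X] [Infinite X]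
    [MulAction (DihedralGroup 0) X]
    (hmin : ∀ x : X, Dense (MulAction.orbit (DihedralGroup 0) x)) (x : X) :
    (MulAction.stabilizer (DihedralGroup 0) x = ⊥ ∨
      ∃ n : ℤ, (MulAction.stabilizer (DihedralGroup 0) x : Set (DihedralGroup 0)) =
        {1, (DihedralGroup.r 1 : DihedralGroup 0) ^ n * DihedralGroup.sr 0}) ∧
      Nat.card (MulAction.stabilizer (DihedralGroup 0) x) ≤ 2 := by
  have hrot : ∀ i, DihedralGroup.r i ∈ MulAction.stabilizer (DihedralGroup 0) x → i = 0 := by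
    intro i hi
    by_contra hi0
    have := DihedralGroup.finiteIndex_zpowers_r hi0
    have := Subgroup.finiteIndex_of_le (Subgroup.zpowers_le.mpr hi)
    have := MulAction.finite_of_dense_orbit (hmin x)
    exact not_finite X
  rcases DihedralGroup.eq_bot_or_exists_coe_eq_pair_sr hrot with hbot | ⟨(i : ℤ), hpair⟩
  · exact ⟨Or.inl hbot, by simp [hbot]⟩
  · refine ⟨Or.inr ⟨-i, ?_⟩, ?_⟩
    · rw [hpair, DihedralGroup.r_one_zpow, DihedralGroup.r_mul_sr, zero_sub, Int.cast_neg,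
        neg_neg]
      rfl
    · rw [← SetLike.coe_sort_coe, Nat.card_coe_set_eq, hpair]
      exact (Set.ncard_insert_le _ _).trans_eq (by rw [Set.ncard_singleton])

/-- For a minimal action of the infinite dihedral group `D_∞ = ⟨s, t ∣ t² = 1, tsts = 1⟩`
(realized as `DihedralGroup 0`, with `s = r 1` and `t = sr 0`) by homeomorphisms on an
infinite compact Hausdorff space `X`: for every `x ∈ X`, either `Stab(x) = {e}` or
`Stab(x) = {e, sⁿt}` for some `n ∈ ℤ`. In particular every stabilizer has order at most 2. -/
theorem dihedral_minimal_stabilizer_eq_bot_or_pair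
    {X : Type*} [TopologicalSpace X] [CompactSpace X] [T2Space X] [Infinite X]
    [MulAction (DihedralGroup 0) X] [ContinuousConstSMul (DihedralGroup 0) X]
    (hmin : ∀ x : X, Dense (MulAction.orbit (DihedralGroup 0) x)) (x : X) :
    (MulAction.stabilizer (DihedralGroup 0) x = ⊥ ∨
      ∃ n : ℤ, (MulAction.stabilizer (DihedralGroup 0) x : Set (DihedralGroup 0)) =
        {1, (DihedralGroup.r 1 : DihedralGroup 0) ^ n * DihedralGroup.sr 0}) ∧
      Nat.card (MulAction.stabilizer (DihedralGroup 0) x) ≤ 2 :=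
  dihedral_minimal_stabilizer_eq_bot_or_pair_general hmin x
end

section
/- Let Γ be a group acting on a Hausdorff topological space X such that each g ∈ Γ acts as a continuous map, and for k ≥ 1 let X_k = {x ∈ X : the orbit Γ·x has exactly k elements}. Then X_k is open in the closed set X_{≤k} = {x ∈ X : Γ·x is finite with at most k elements}; in particular X_k is locally closed in X, and if X is in addition locally compact then X_k is a locally compact Hausdorff space in its subspace topology. -/
/-!
A point has at least `n` orbit points iff some `g₁, …, gₙ` move it to pairwise distinct
points, and each condition `gᵢ • x ≠ gⱼ • x` is open since `X` is Hausdorff and the `gᵢ` act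
continuously. So `{x | n ≤ |Γ • x|}` is open for every `n`; taking `n = k + 1` shows that
`X_{≤k}` is closed, and `X_k = {x | k ≤ |Γ • x|} ∩ X_{≤k}`.
-/

open Function Set MulAction

universe u v

theorem Set.encard_eq_coe_iff_finite_ncard_eq {α : Type*} {s : Set α} {k : ℕ} :
    s.encard = k ↔ s.Finite ∧ s.ncard = k :=
  ⟨fun h => ⟨finite_of_encard_eq_coe h, by simp [ncard_def, h]⟩,
    fun ⟨hs, h⟩ => h ▸ hs.cast_ncard_eq.symm⟩

theorem Set.natCast_le_encard_range_iff {α : Type u} {β : Type v} {f : α → β} {n : ℕ} :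
    (n : ℕ∞) ≤ (range f).encard ↔ ∃ a : Fin n → α, Injective (f ∘ a) := by
  rw [← ENat.card_coe_set_eq, ENat.card, Cardinal.natCast_le_toENat, ← Cardinal.lift_mk_fin.{v},
    ← Cardinal.lift_uzero (Cardinal.mk (range f)), Cardinal.lift_mk_le']
  constructor
  · rintro ⟨e⟩
    exact ⟨rangeSplitting f ∘ e,
      fun i j h => e.injective (Subtype.ext (by simpa [apply_rangeSplitting] using h))⟩
  · rintro ⟨a, ha⟩
    exact ⟨⟨rangeFactorization f ∘ a, fun i j h => ha (congrArg Subtype.val h)⟩⟩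

theorem isOpen_setOf_injective {ι X Y : Type*} [Finite ι] [TopologicalSpace X]
    [TopologicalSpace Y] [T2Space Y] {f : ι → X → Y} (hf : ∀ i, Continuous (f i)) :
    IsOpen {x | Injective fun i => f i x} := by
  simp only [injective_iff_pairwise_ne, Pairwise, ofPred_forall]
  exact isOpen_iInter_of_finite fun i => isOpen_iInter_of_finite fun j =>
    isOpen_iInter_of_finite fun _ => isOpen_ne_fun (hf i) (hf j)

section OrbitCardinality

variable {Γ X : Type*} [Monoid Γ] [TopologicalSpace X] [T2Space X] [MulAction Γ X]
  [ContinuousConstSMul Γ X]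

theorem isOpen_setOf_natCast_le_encard_orbit (n : ℕ) :
    IsOpen {x : X | (n : ℕ∞) ≤ (orbit Γ x).encard} := by
  simp only [orbit, natCast_le_encard_range_iff, ofPred_exists]
  exact isOpen_iUnion fun g => isOpen_setOf_injective fun i => continuous_const_smul (g i)

theorem isClosed_setOf_encard_orbit_le (n : ℕ) :
    IsClosed {x : X | (orbit Γ x).encard ≤ n} := by
  rw [← isOpen_compl_iff]
  simp_rw [compl_ofPred, not_le, ← ENat.add_one_le_iff (ENat.natCast_ne_top n)]
  exact_mod_cast isOpen_setOf_natCast_le_encard_orbit (n + 1)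

end OrbitCardinality

theorem points_with_orbit_card_eq_locallyClosed_general
    {Γ X : Type*} [Group Γ] [TopologicalSpace X] [T2Space X]
    [MulAction Γ X] [ContinuousConstSMul Γ X] (k : ℕ) :
    (∃ V : Set X, IsOpen V ∧
        {x : X | (MulAction.orbit Γ x).Finite ∧ (MulAction.orbit Γ x).ncard = k} =
          V ∩ {x : X | (MulAction.orbit Γ x).Finite ∧ (MulAction.orbit Γ x).ncard ≤ k}) ∧
      IsLocallyClosed
        {x : X | (MulAction.orbit Γ x).Finite ∧ (MulAction.orbit Γ x).ncard = k} ∧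
      (LocallyCompactSpace X →
        (LocallyCompactSpace
            {x : X // (MulAction.orbit Γ x).Finite ∧ (MulAction.orbit Γ x).ncard = k} ∧
          T2Space
            {x : X // (MulAction.orbit Γ x).Finite ∧ (MulAction.orbit Γ x).ncard = k})) := by
  have hopen := isOpen_setOf_natCast_le_encard_orbit (Γ := Γ) (X := X) k
  have hclosed : IsClosed {x : X | (orbit Γ x).Finite ∧ (orbit Γ x).ncard ≤ k} := by
    simpa only [encard_le_coe_iff_finite_ncard_le] using isClosed_setOf_encard_orbit_le k
  have hXk : {x : X | (orbit Γ x).Finite ∧ (orbit Γ x).ncard = k} =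
      {x | (k : ℕ∞) ≤ (orbit Γ x).encard} ∩
        {x | (orbit Γ x).Finite ∧ (orbit Γ x).ncard ≤ k} := by
    ext x
    simp only [mem_ofPred_eq, mem_inter_iff, ← encard_eq_coe_iff_finite_ncard_eq,
      ← encard_le_coe_iff_finite_ncard_le]
    exact le_antisymm_iff.trans and_comm
  have hlc : IsLocallyClosed {x : X | (orbit Γ x).Finite ∧ (orbit Γ x).ncard = k} :=
    ⟨_, _, hopen, hclosed, hXk⟩
  exact ⟨⟨_, hopen, hXk⟩, hlc, fun _ => ⟨hlc.locallyCompactSpace, inferInstance⟩⟩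

/-- Let a group `Γ` act on a Hausdorff space `X` with each `g ∈ Γ` acting continuously,
and for `k ≥ 1` let `X_k` be the set of points whose orbit has exactly `k` elements.
Then `X_k` is open in the closed set `X_{≤k}` (i.e. `X_k = V ∩ X_{≤k}` for some open
`V ⊆ X`); in particular `X_k` is locally closed in `X`, and if `X` is moreover locally
compact then `X_k` is a locally compact Hausdorff space in the subspace topology. -/
theorem points_with_orbit_card_eq_locallyClosed
    {Γ X : Type*} [Group Γ] [TopologicalSpace X] [T2Space X]
    [MulAction Γ X] [ContinuousConstSMul Γ X] (k : ℕ) (hk : 1 ≤ k) :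
    (∃ V : Set X, IsOpen V ∧
        {x : X | (MulAction.orbit Γ x).Finite ∧ (MulAction.orbit Γ x).ncard = k} =
          V ∩ {x : X | (MulAction.orbit Γ x).Finite ∧ (MulAction.orbit Γ x).ncard ≤ k}) ∧
      IsLocallyClosed
        {x : X | (MulAction.orbit Γ x).Finite ∧ (MulAction.orbit Γ x).ncard = k} ∧
      (LocallyCompactSpace X →
        (LocallyCompactSpace
            {x : X // (MulAction.orbit Γ x).Finite ∧ (MulAction.orbit Γ x).ncard = k} ∧
          T2Space
            {x : X // (MulAction.orbit Γ x).Finite ∧ (MulAction.orbit Γ x).ncard = k})) :=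
  points_with_orbit_card_eq_locallyClosed_general k
end

section
/- Let Γ be a group acting on a Hausdorff topological space X such that each g ∈ Γ acts as a continuous map, let k ≥ 1, and let X_k = {x ∈ X : the orbit Γ·x has exactly k elements}. Then for any x, y ∈ X_k with Γ·x ≠ Γ·y there exist Γ-invariant open subsets U, V ⊆ X with x ∈ U, y ∈ V and U ∩ V ∩ X_k = ∅. Consequently, the image of X_k in the orbit space X/Γ (equipped with the quotient topology) is Hausdorff in its subspace topology. -/
/-!
Separate the finitely many points of the two orbits `Γ·x` and `Γ·y` by pairwise disjoint
open sets `O p`, and write each `p ∈ Γ·x` as `σ p • x`. Near `x` every `w` satisfies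
`σ p • w ∈ O p` for all `p ∈ Γ·x`; these are `k` distinct points of `Γ·w`, so if `Γ·w` has
only `k` points, the whole orbit of `w` lies in `⋃ p ∈ Γ·x, O p`. The same holds near `y`
with `Γ·y`, and an orbit cannot lie in both unions since `Γ·x` and `Γ·y` are disjoint.
Saturating the two neighbourhoods (the quotient map is open) gives the invariant open sets.
-/

open Pointwise Set MulAction

lemma Set.subset_biUnion_of_mapsTo_of_ncard_le {ι α : Type*} {s : Set ι} {t : Set α}
    {O : ι → Set α} {f : ι → α} (hO : s.PairwiseDisjoint O) (hfO : ∀ i ∈ s, f i ∈ O i)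
    (hf : MapsTo f s t) (ht : t.Finite) (hcard : t.ncard ≤ s.ncard) :
    t ⊆ ⋃ i ∈ s, O i := by
  have hinj : InjOn f s := fun i hi j hj hij =>
    hO.elim_set hi hj (f i) (hfO i hi) (hij ▸ hfO j hj)
  have himage : f '' s = t :=
    eq_of_subset_of_ncard_le hf.image_subset (by rwa [hinj.ncard_image]) ht
  rw [← himage]
  rintro _ ⟨i, hi, rfl⟩
  exact mem_biUnion hi (hfO i hi)

section OrbitSeparation

variable {Γ X : Type*} [Group Γ] [MulAction Γ X]

variable (Γ) in
def pointsWithOrbitNcard (k : ℕ) : Set X :=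
  {z | (orbit Γ z).Finite ∧ (orbit Γ z).ncard = k}

lemma smul_preimage_quotientMk (g : Γ) (U : Set (orbitRel.Quotient Γ X)) :
    g • (Quotient.mk (orbitRel Γ X) ⁻¹' U) = Quotient.mk (orbitRel Γ X) ⁻¹' U := by
  ext z
  rw [mem_smul_set_iff_inv_smul_mem, mem_preimage, mem_preimage,
    orbitRel.Quotient.quotient_smul_eq]

variable [TopologicalSpace X] [ContinuousConstSMul Γ X]

lemma exists_isOpen_orbit_subset_biUnion {x : X}
    (hx : (orbit Γ x).Finite) {O : X → Set X} (hOopen : ∀ p ∈ orbit Γ x, IsOpen (O p))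
    (hmem : ∀ p ∈ orbit Γ x, p ∈ O p) (hdisj : (orbit Γ x).PairwiseDisjoint O) :
    ∃ W : Set X, IsOpen W ∧ x ∈ W ∧ ∀ w ∈ W, (orbit Γ w).Finite →
      (orbit Γ w).ncard ≤ (orbit Γ x).ncard → orbit Γ w ⊆ ⋃ p ∈ orbit Γ x, O p := by
  have hrep : ∀ p ∈ orbit Γ x, ∃ g : Γ, g • x = p := fun p hp => hp
  choose! σ hσ using hrep
  refine ⟨⋂ p ∈ orbit Γ x, (σ p • ·) ⁻¹' O p,
    hx.isOpen_biInter fun p hp => (hOopen p hp).preimage (continuous_const_smul _),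
    mem_iInter₂.2 fun p hp => by simp only [mem_preimage, hσ p hp, hmem p hp], ?_⟩
  intro w hw hwf hcard
  exact subset_biUnion_of_mapsTo_of_ncard_le hdisj (fun p hp => mem_iInter₂.1 hw p hp)
    (fun p _ => mem_orbit w (σ p)) hwf hcard

lemma exists_isOpen_quotient_separating [T2Space X] {k : ℕ} {x y : X}
    (hx : x ∈ pointsWithOrbitNcard Γ k) (hy : y ∈ pointsWithOrbitNcard Γ k)
    (hne : orbit Γ x ≠ orbit Γ y) :
    ∃ U V : Set (orbitRel.Quotient Γ X), IsOpen U ∧ IsOpen V ∧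
      Quotient.mk _ x ∈ U ∧ Quotient.mk _ y ∈ V ∧
      U ∩ V ∩ Quotient.mk _ '' pointsWithOrbitNcard Γ k = ∅ := by
  obtain ⟨O, hO, hOdisj⟩ := (hx.1.union hy.1).t2_separation
  obtain ⟨Wx, hWxo, hxW, hWx⟩ := exists_isOpen_orbit_subset_biUnion hx.1
    (fun p _ => (hO p).2) (fun p _ => (hO p).1) (hOdisj.subset subset_union_left)
  obtain ⟨Wy, hWyo, hyW, hWy⟩ := exists_isOpen_orbit_subset_biUnion hy.1
    (fun p _ => (hO p).2) (fun p _ => (hO p).1) (hOdisj.subset subset_union_right)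
  refine ⟨_, _, isOpenMap_quotient_mk'_mul _ hWxo, isOpenMap_quotient_mk'_mul _ hWyo,
    mem_image_of_mem _ hxW, mem_image_of_mem _ hyW, ?_⟩
  rw [eq_empty_iff_forall_notMem]
  rintro _ ⟨⟨⟨u, hu, huz⟩, ⟨v, hv, hvz⟩⟩, z, hz, rfl⟩
  have hzu : orbit Γ u = orbit Γ z := orbit_eq_iff.2 (orbitRel_apply.1 (Quotient.exact huz))
  have hzv : orbit Γ v = orbit Γ z := orbit_eq_iff.2 (orbitRel_apply.1 (Quotient.exact hvz))
  have hzx : z ∈ ⋃ p ∈ orbit Γ x, O p :=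
    hWx u hu (hzu ▸ hz.1) (by rw [hzu, hz.2, hx.2]) (hzu ▸ mem_orbit_self z)
  have hzy : z ∈ ⋃ q ∈ orbit Γ y, O q :=
    hWy v hv (hzv ▸ hz.1) (by rw [hzv, hz.2, hy.2]) (hzv ▸ mem_orbit_self z)
  obtain ⟨p, hp, hzp⟩ := mem_iUnion₂.1 hzx
  obtain ⟨q, hq, hzq⟩ := mem_iUnion₂.1 hzy
  have hpq : p = q := hOdisj.elim_set (Or.inl hp) (Or.inr hq) z hzp hzq
  exact disjoint_left.1 ((orbit.eq_or_disjoint x y).resolve_left hne) hp (hpq ▸ hq)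

end OrbitSeparation

theorem image_points_with_orbit_card_eq_t2_general
    {Γ X : Type*} [Group Γ] [TopologicalSpace X] [T2Space X]
    [MulAction Γ X] [ContinuousConstSMul Γ X] (k : ℕ) :
    (∀ x y : X,
        (MulAction.orbit Γ x).Finite → (MulAction.orbit Γ x).ncard = k →
        (MulAction.orbit Γ y).Finite → (MulAction.orbit Γ y).ncard = k →
        MulAction.orbit Γ x ≠ MulAction.orbit Γ y →
        ∃ U V : Set X, IsOpen U ∧ IsOpen V ∧
          (∀ g : Γ, g • U = U) ∧ (∀ g : Γ, g • V = V) ∧ x ∈ U ∧ y ∈ V ∧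
          U ∩ V ∩ {z : X | (MulAction.orbit Γ z).Finite ∧ (MulAction.orbit Γ z).ncard = k}
            = ∅) ∧
      T2Space
        ((Quotient.mk (MulAction.orbitRel Γ X) ''
            {z : X | (MulAction.orbit Γ z).Finite ∧ (MulAction.orbit Γ z).ncard = k}) :
          Set (Quotient (MulAction.orbitRel Γ X))) := by
  refine ⟨fun x y hxf hxc hyf hyc hne => ?_, ⟨?_⟩⟩
  · obtain ⟨U, V, hU, hV, hxU, hyV, hUV⟩ :=
      exists_isOpen_quotient_separating (k := k) ⟨hxf, hxc⟩ ⟨hyf, hyc⟩ hne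
    refine ⟨_, _, hU.preimage continuous_quot_mk, hV.preimage continuous_quot_mk,
      fun g => smul_preimage_quotientMk g U, fun g => smul_preimage_quotientMk g V, hxU, hyV, ?_⟩
    rw [eq_empty_iff_forall_notMem]
    rintro z ⟨hzUV, hz⟩
    exact hUV.subset ⟨hzUV, z, hz, rfl⟩
  · rintro ⟨_, x, hx, rfl⟩ ⟨_, y, hy, rfl⟩ hxy
    have hne : orbit Γ x ≠ orbit Γ y := fun h =>
      hxy (Subtype.ext (Quotient.sound (orbitRel_apply.2 (orbit_eq_iff.1 h))))
    obtain ⟨U, V, hU, hV, hxU, hyV, hUV⟩ := exists_isOpen_quotient_separating hx hy hne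
    refine ⟨_, _, hU.preimage continuous_subtype_val, hV.preimage continuous_subtype_val,
      hxU, hyV, disjoint_left.2 fun c hcU hcV => ?_⟩
    exact hUV.subset ⟨⟨hcU, hcV⟩, c.2⟩

/-- Let a group `Γ` act on a Hausdorff space `X` with each `g ∈ Γ` acting continuously,
let `k ≥ 1`, and let `X_k` be the set of points whose orbit has exactly `k` elements.
Then any two distinct orbits of points of `X_k` can be separated by `Γ`-invariant open
sets whose intersection misses `X_k`; consequently the image of `X_k` in the orbit space
`X/Γ` (with the quotient topology) is Hausdorff in its subspace topology. -/
theorem image_points_with_orbit_card_eq_t2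
    {Γ X : Type*} [Group Γ] [TopologicalSpace X] [T2Space X]
    [MulAction Γ X] [ContinuousConstSMul Γ X] (k : ℕ) (hk : 1 ≤ k) :
    (∀ x y : X,
        (MulAction.orbit Γ x).Finite → (MulAction.orbit Γ x).ncard = k →
        (MulAction.orbit Γ y).Finite → (MulAction.orbit Γ y).ncard = k →
        MulAction.orbit Γ x ≠ MulAction.orbit Γ y →
        ∃ U V : Set X, IsOpen U ∧ IsOpen V ∧
          (∀ g : Γ, g • U = U) ∧ (∀ g : Γ, g • V = V) ∧ x ∈ U ∧ y ∈ V ∧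
          U ∩ V ∩ {z : X | (MulAction.orbit Γ z).Finite ∧ (MulAction.orbit Γ z).ncard = k}
            = ∅) ∧
      T2Space
        ((Quotient.mk (MulAction.orbitRel Γ X) ''
            {z : X | (MulAction.orbit Γ z).Finite ∧ (MulAction.orbit Γ z).ncard = k}) :
          Set (Quotient (MulAction.orbitRel Γ X))) :=
  image_points_with_orbit_card_eq_t2_general k
end
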